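/- For all integers x ≥ 1 and m ≥ x+2, twice the number of codewords of C(m,x) whose x+2 leftmost bits are all 1 (i.e., codewords starting with 1^{x+2} from the left, Group 5) is N(m−x−1,x). -/

import Mathlib

/-- `noForbidden m x c` says the binary word `c = (c_{m-1}, …, c_0)` contains no contiguous
subword of the form `0 1^y 0` or `1 0^y 1` for any `1 ≤ y ≤ x`. -/
def noForbidden (m x : ℕ) (c : Fin m → Bool) : Prop :=
  ∀ j y : ℕ, 1 ≤ y → y ≤ x → (h : j + y + 1 < m) →
    ¬ ((∀ k, 1 ≤ k → (hk : k ≤ y) → c ⟨j + k, by omega⟩ = ! c ⟨j, by omega⟩) ∧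
        c ⟨j + y + 1, h⟩ = c ⟨j, by omega⟩)

/-- `N(m, x)`: the cardinality of the LOCO code `C(m, x)`. -/
noncomputable def locoN (m x : ℕ) : ℕ := Nat.card {c : Fin m → Bool // noForbidden m x c}

/-- `N(k, x)` extended to integer `k` by the convention `N(k, x) = 2` for `k ≤ 1`. -/
noncomputable def Nex (k : ℤ) (x : ℕ) : ℤ := if k ≤ 1 then 2 else (locoN k.toNat x : ℤ)

/-- Strict lexicographic order on binary words, comparing bits from `c_{m-1}`
(most significant) down to `c_0`, with `0 < 1`. -/
def lexLt (m : ℕ) (d c : Fin m → Bool) : Prop :=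
  ∃ i : Fin m, d i = false ∧ c i = true ∧ ∀ j : Fin m, (i : ℕ) < (j : ℕ) → d j = c j

/-- The index `g(m, x, c)` of a codeword: the number of codewords of `C(m, x)` that
precede `c` in lexicographic order. -/
noncomputable def locoIdx (m x : ℕ) (c : Fin m → Bool) : ℕ :=
  Nat.card {d : Fin m → Bool // noForbidden m x d ∧ lexLt m d c}

/-!
Let `k = m - x - 2`. A word whose bits at positions `k, …, m - 1` are all `1` cannot contain a
forbidden pattern reaching above position `k`: such a pattern `b a^y b` would need two adjacent
bits `a b` with `a ≠ b` in the all-ones block. Hence truncation to the low `k + 1` bits is a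
bijection from Group 5 onto the codewords of length `k + 1` with top bit `1`. Complementing all
bits preserves the code, so exactly half of `C(k + 1, x)` has top bit `1`.
-/

lemma Nat.card_subtype_eq_card_and_add_card_and_not {α : Type*} [Finite α] (P Q : α → Prop) :
    Nat.card {a // P a} = Nat.card {a // P a ∧ Q a} + Nat.card {a // P a ∧ ¬Q a} := by
  classical
  rw [← Nat.card_congr (Equiv.sumCompl fun a : {a // P a} => Q a.1), Nat.card_sum,
    Nat.card_congr (Equiv.subtypeSubtypeEquivSubtypeInter P Q),
    Nat.card_congr (Equiv.subtypeSubtypeEquivSubtypeInter P fun a => ¬Q a)]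

lemma Nat.card_subtype_eq_two_mul_card_apply_eq_true {ι : Type*} [Finite ι]
    {P : (ι → Bool) → Prop} (hP : ∀ c, P (not ∘ c) ↔ P c) (i : ι) :
    Nat.card {c // P c} = 2 * Nat.card {c // P c ∧ c i = true} := by
  have hflip : {c // P c ∧ c i = true} ≃ {c // P c ∧ ¬c i = true} :=
    Equiv.subtypeEquiv (Equiv.piCongrRight fun _ => Equiv.boolNot) fun c => by
      change _ ↔ P (not ∘ c) ∧ ¬(not ∘ c) i = true
      simp [hP]
  rw [Nat.card_subtype_eq_card_and_add_card_and_not P (· i = true), ← Nat.card_congr hflip,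
    two_mul]

section LOCO

variable {m n k x : ℕ}

lemma noForbidden_of_le_two (hm : m ≤ 2) (c : Fin m → Bool) : noForbidden m x c := by
  intro j y hy _ hlt
  omega

lemma locoN_of_le_two (hm : m ≤ 2) : locoN m x = 2 ^ m := by
  rw [locoN, Nat.card_congr (Equiv.subtypeUnivEquiv (noForbidden_of_le_two hm)), Nat.card_fun]
  simp

lemma Nex_natCast_add_one (k x : ℕ) : Nex ((k : ℤ) + 1) x = locoN (k + 1) x := by
  rcases Nat.eq_zero_or_pos k with rfl | hk
  · simp [Nex, locoN_of_le_two]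
  · rw [Nex, if_neg (by omega)]
    norm_cast

lemma noForbidden.not_comp {c : Fin m → Bool} (h : noForbidden m x c) :
    noForbidden m x (not ∘ c) := by
  intro j y hy1 hy2 hlt ⟨hrun, hend⟩
  exact h j y hy1 hy2 hlt ⟨fun k hk1 hk2 => by simpa using hrun k hk1 hk2, by simpa using hend⟩

lemma noForbidden_not_comp_iff {c : Fin m → Bool} :
    noForbidden m x (not ∘ c) ↔ noForbidden m x c :=
  ⟨fun h => by simpa [Function.comp_def] using h.not_comp, noForbidden.not_comp⟩

lemma noForbidden.comp_castLE (hnm : n ≤ m) {c : Fin m → Bool} (h : noForbidden m x c) :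
    noForbidden n x (c ∘ Fin.castLE hnm) := by
  intro j y hy1 hy2 hlt hc
  exact h j y hy1 hy2 (by omega) hc

lemma noForbidden_of_comp_castLE (hkm : k + 1 ≤ m) {c : Fin m → Bool}
    (hones : ∀ i : Fin m, k ≤ i → c i = true)
    (h : noForbidden (k + 1) x (c ∘ Fin.castLE hkm)) : noForbidden m x c := by
  intro j y hy1 hy2 hlt ⟨hrun, hend⟩
  by_cases hlow : j + y + 1 < k + 1
  · exact h j y hy1 hy2 hlow ⟨hrun, hend⟩
  · -- the last two bits of the pattern lie in the all-ones block, but they must differ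
    have hflip := hrun y hy1 le_rfl
    rw [hones _ (by dsimp only; omega)] at hflip
    rw [hones _ (by dsimp only; omega)] at hend
    rw [← hend] at hflip
    simp at hflip

def padOnes (m : ℕ) (d : Fin n → Bool) : Fin m → Bool :=
  fun i => if h : (i : ℕ) < n then d ⟨i, h⟩ else true

lemma padOnes_comp_castLE (hnm : n ≤ m) (d : Fin n → Bool) :
    padOnes m d ∘ Fin.castLE hnm = d := by
  funext i
  simp [padOnes]

lemma padOnes_apply_of_le {d : Fin (k + 1) → Bool} (hd : d (Fin.last k) = true) {i : Fin m}
    (hi : k ≤ i) : padOnes m d i = true := by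
  unfold padOnes
  split_ifs with h
  · rwa [show (⟨i, h⟩ : Fin (k + 1)) = Fin.last k from
      Fin.ext (by simp only [Fin.val_last]; omega)]
  · rfl

lemma padOnes_comp_castLE_eq_self (hkm : k + 1 ≤ m) {c : Fin m → Bool}
    (hones : ∀ i : Fin m, k ≤ i → c i = true) : padOnes m (c ∘ Fin.castLE hkm) = c := by
  funext i
  unfold padOnes
  split_ifs with h
  · rfl
  · exact (hones i (by omega)).symm

def truncateEquiv (hkm : k + 1 ≤ m) :
    {c : Fin m → Bool // noForbidden m x c ∧ ∀ i : Fin m, k ≤ i → c i = true} ≃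
      {d : Fin (k + 1) → Bool // noForbidden (k + 1) x d ∧ d (Fin.last k) = true} where
  toFun c := ⟨c.1 ∘ Fin.castLE hkm, c.2.1.comp_castLE hkm, c.2.2 _ (by simp)⟩
  invFun d := ⟨padOnes m d.1,
    noForbidden_of_comp_castLE hkm (fun _ => padOnes_apply_of_le d.2.2)
      (by rw [padOnes_comp_castLE]; exact d.2.1),
    fun _ => padOnes_apply_of_le d.2.2⟩
  left_inv c := Subtype.ext (padOnes_comp_castLE_eq_self hkm c.2.2)
  right_inv d := Subtype.ext (padOnes_comp_castLE hkm d.1)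

end LOCO

/-- For all `x ≥ 1` and `m ≥ x + 2`, twice the number of codewords of
`C(m, x)` whose `x + 2` leftmost bits are all `1` (Group 5) is `N(m - x - 1, x)`. -/
theorem loco_group5_card (m x : ℕ) (hm : x + 2 ≤ m) :
    2 * (Nat.card {c : Fin m → Bool // noForbidden m x c ∧
          ∀ k, k ≤ x + 1 → c ⟨m - 1 - k, by omega⟩ = true} : ℤ)
      = Nex ((m : ℤ) - (x : ℤ) - 1) x := by
  obtain ⟨k, hk⟩ : ∃ k, m = k + x + 2 := ⟨m - x - 2, by omega⟩
  have hgroup : ∀ c : Fin m → Bool,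
      (∀ j, j ≤ x + 1 → c ⟨m - 1 - j, by omega⟩ = true) ↔
        ∀ i : Fin m, k ≤ i → c i = true := fun c =>
    ⟨fun h i hi => by
        simpa [show m - 1 - (m - 1 - i) = i by omega] using h (m - 1 - i) (by omega),
      fun h j hj => h _ (by dsimp only; omega)⟩
  rw [Nat.card_congr
      ((Equiv.subtypeEquivRight fun c => and_congr_right fun _ => hgroup c).trans
        (truncateEquiv (by omega))),
    show (m : ℤ) - x - 1 = (k : ℤ) + 1 by omega, Nex_natCast_add_one, locoN,
    Nat.card_subtype_eq_two_mul_card_apply_eq_true (fun _ => noForbidden_not_comp_iff)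
      (Fin.last k), Nat.cast_mul, Nat.cast_ofNat]
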